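/- For the 8-dimensional Lie algebra L_{8,21} with nonzero brackets [X_1,X_2]=2X_2, [X_1,X_3]=-2X_3, [X_2,X_3]=X_1, [X_1,X_4]=4X_4, [X_1,X_5]=2X_5, [X_1,X_7]=-2X_7, [X_1,X_8]=-4X_8, [X_2,X_5]=4X_4, [X_2,X_6]=3X_5, [X_2,X_7]=2X_6, [X_2,X_8]=X_7, [X_3,X_4]=X_5, [X_3,X_5]=2X_6, [X_3,X_6]=3X_7, [X_3,X_7]=4X_8, the polynomials I_1 = 3x_5x_7 - x_6^2 - 12x_4x_8 and I_2 = -2x_6^3 + 9x_5x_6x_7 + 72x_4x_6x_8 - 27x_4x_7^2 - 27x_5^2x_8 are annihilated by all coadjoint vector fields X̂_i = C_{ij}^k x_k ∂/∂x_j, i = 1,…,8. -/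

import Mathlib

open scoped BigOperators

noncomputable def Xhat {n : ℕ} (C : Fin n → Fin n → Fin n → ℝ)
    (F : (Fin n → ℝ) → ℝ) (i : Fin n) (x : Fin n → ℝ) : ℝ :=
  ∑ j, ∑ k, C i j k * x k * fderiv ℝ F x (Pi.single j 1)

def C821 : Fin 8 → Fin 8 → Fin 8 → ℝ := fun i j k =>
  match i.1, j.1, k.1 with
  | 0, 1, 1 => 2
  | 1, 0, 1 => -2
  | 0, 2, 2 => -2
  | 2, 0, 2 => 2
  | 1, 2, 0 => 1
  | 2, 1, 0 => -1
  | 0, 3, 3 => 4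
  | 3, 0, 3 => -4
  | 0, 4, 4 => 2
  | 4, 0, 4 => -2
  | 0, 6, 6 => -2
  | 6, 0, 6 => 2
  | 0, 7, 7 => -4
  | 7, 0, 7 => 4
  | 1, 4, 3 => 4
  | 4, 1, 3 => -4
  | 1, 5, 4 => 3
  | 5, 1, 4 => -3
  | 1, 6, 5 => 2
  | 6, 1, 5 => -2
  | 1, 7, 6 => 1
  | 7, 1, 6 => -1
  | 2, 3, 4 => 1
  | 3, 2, 4 => -1
  | 2, 4, 5 => 2
  | 4, 2, 5 => -2
  | 2, 5, 6 => 3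
  | 5, 2, 6 => -3
  | 2, 6, 7 => 4
  | 6, 2, 7 => -4
  | _, _, _ => 0


open ContinuousLinearMap in
lemma hF1 (x : Fin 8 → ℝ) :
    HasFDerivAt (fun y : Fin 8 → ℝ => 3 * y 4 * y 6 - (y 5)^2 - 12 * y 3 * y 7)
      (((3 * x 6) • proj 4 + (3 * x 4) • proj 6 - (2 * x 5) • proj 5
        - ((12 * x 7) • proj 3 + (12 * x 3) • proj 7) : (Fin 8 → ℝ) →L[ℝ] ℝ)) x := by
  have h : ∀ j : Fin 8, HasFDerivAt (fun y : Fin 8 → ℝ => y j)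
      (proj j : (Fin 8 → ℝ) →L[ℝ] ℝ) x :=
    fun j => (proj j : (Fin 8 → ℝ) →L[ℝ] ℝ).hasFDerivAt
  have e : (fun y : Fin 8 → ℝ => 3 * y 4 * y 6 - (y 5)^2 - 12 * y 3 * y 7)
      = fun y : Fin 8 → ℝ => 3 * y 4 * y 6 - y 5 * y 5 - 12 * y 3 * y 7 := by
    funext y; ring
  rw [e]
  have H := ((((h 4).const_mul 3).mul (h 6)).sub ((h 5).mul (h 5))).sub
    (((h 3).const_mul 12).mul (h 7))
  refine H.congr_fderiv ?_
  ext y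
  simp only [ContinuousLinearMap.smul_apply, ContinuousLinearMap.add_apply,
    ContinuousLinearMap.sub_apply, ContinuousLinearMap.coe_smul', Pi.smul_apply,
    ContinuousLinearMap.proj_apply, smul_eq_mul]
  ring

open ContinuousLinearMap in
lemma hF2 (x : Fin 8 → ℝ) :
    HasFDerivAt (fun y : Fin 8 → ℝ => -2 * (y 5)^3 + 9 * y 4 * y 5 * y 6 + 72 * y 3 * y 5 * y 7
        - 27 * y 3 * (y 6)^2 - 27 * (y 4)^2 * y 7)
      (((72 * x 5 * x 7 - 27 * (x 6)^2) • proj 3 + (9 * x 5 * x 6 - 54 * x 4 * x 7) • proj 4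
        + (-6 * (x 5)^2 + 9 * x 4 * x 6 + 72 * x 3 * x 7) • proj 5
        + (9 * x 4 * x 5 - 54 * x 3 * x 6) • proj 6
        + (72 * x 3 * x 5 - 27 * (x 4)^2) • proj 7 : (Fin 8 → ℝ) →L[ℝ] ℝ)) x := by
  have h : ∀ j : Fin 8, HasFDerivAt (fun y : Fin 8 → ℝ => y j)
      (proj j : (Fin 8 → ℝ) →L[ℝ] ℝ) x :=
    fun j => (proj j : (Fin 8 → ℝ) →L[ℝ] ℝ).hasFDerivAt
  have e : (fun y : Fin 8 → ℝ => -2 * (y 5)^3 + 9 * y 4 * y 5 * y 6 + 72 * y 3 * y 5 * y 7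
      - 27 * y 3 * (y 6)^2 - 27 * (y 4)^2 * y 7)
      = fun y : Fin 8 → ℝ => -2 * (y 5 * y 5 * y 5) + 9 * y 4 * y 5 * y 6 + 72 * y 3 * y 5 * y 7
      - 27 * y 3 * (y 6 * y 6) - 27 * (y 4 * y 4) * y 7 := by
    funext y; ring
  rw [e]
  have H := ((((((h 5).mul (h 5)).mul (h 5)).const_mul (-2)).add
      ((((h 4).const_mul 9).mul (h 5)).mul (h 6))).add
      ((((h 3).const_mul 72).mul (h 5)).mul (h 7))).sub
      (((h 3).const_mul 27).mul ((h 6).mul (h 6))) |>.sub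
      ((((h 4).mul (h 4)).const_mul 27).mul (h 7))
  refine H.congr_fderiv ?_
  ext y
  simp only [ContinuousLinearMap.smul_apply, ContinuousLinearMap.add_apply,
    ContinuousLinearMap.sub_apply, ContinuousLinearMap.coe_smul', Pi.smul_apply,
    ContinuousLinearMap.proj_apply, smul_eq_mul, Pi.mul_apply]
  ring

lemma C821_warm : C821 0 0 0 = 0 := by simp [C821]

set_option maxHeartbeats 8000000 in
theorem L821_invariants :
    ∀ (i : Fin 8) (x : Fin 8 → ℝ),
      Xhat C821 (fun y => 3 * y 4 * y 6 - (y 5)^2 - 12 * y 3 * y 7) i x = 0 ∧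
      Xhat C821 (fun y => -2 * (y 5)^3 + 9 * y 4 * y 5 * y 6 + 72 * y 3 * y 5 * y 7
        - 27 * y 3 * (y 6)^2 - 27 * (y 4)^2 * y 7) i x = 0 := by
  intro i x
  refine ⟨?_, ?_⟩
  · unfold Xhat
    rw [(hF1 x).fderiv]
    fin_cases i <;>
      simp only [Fin.sum_univ_eight, ContinuousLinearMap.sub_apply,
        ContinuousLinearMap.add_apply, ContinuousLinearMap.smul_apply,
        ContinuousLinearMap.proj_apply, smul_eq_mul] <;>
      simp [C821, Pi.single_apply] <;> ring
  · unfold Xhat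
    rw [(hF2 x).fderiv]
    fin_cases i <;>
      simp only [Fin.sum_univ_eight, ContinuousLinearMap.sub_apply,
        ContinuousLinearMap.add_apply, ContinuousLinearMap.smul_apply,
        ContinuousLinearMap.proj_apply, smul_eq_mul] <;>
      simp [C821, Pi.single_apply] <;> ring
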